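/- arXiv:2601.11445 — 3 statements merged into one kernel-verified Lean document; each statement's English description precedes it below -/
import Mathlib

section
/- Let H be a real Hilbert space and C : [0,T] ⇉ H a set-valued map satisfying conditions (H1) (with constant ρ > 0), (H2) and (H4). Let A ⊆ C([0,T];H) be an equicontinuous family of continuous functions with h(0) = 0 for every h ∈ A. Then there exist δ > 0 and 𝔯 > 0 such that for every h ∈ A, every t̄ ∈ [0,T] and every x̄ ∈ bd(C(t̄) − h(t̄)), there exists z ∈ H satisfying: (i) the open ball B_𝔯(z) is contained in C(t) − h(t) for every t ∈ (t̄ − δ, t̄ + δ) ∩ [0,T], and (ii) (1/ρ)(‖x̄ − z‖ + 𝔯)² < 𝔯/2. -/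
open Set Metric
open scoped ENNReal

/-- The proximal normal cone of a set `S` at a point `x`. -/
def proxNormalCone {H : Type*} [NormedAddCommGroup H] [InnerProductSpace ℝ H]
    (S : Set H) (x : H) : Set H :=
  {ζ | ∃ σ : ℝ, 0 ≤ σ ∧ ∀ y ∈ S, (inner ℝ ζ (y - x) : ℝ) ≤ σ * ‖y - x‖ ^ 2}

/-- A set `S` is `ρ`-uniformly prox-regular. -/
def UniformProxRegular {H : Type*} [NormedAddCommGroup H] [InnerProductSpace ℝ H]
    (ρ : ℝ) (S : Set H) : Prop :=
  ∀ x ∈ S, ∀ ζ ∈ proxNormalCone S x, ∀ x' ∈ S,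
    (inner ℝ ζ (x' - x) : ℝ) ≤ ‖ζ‖ / (2 * ρ) * ‖x' - x‖ ^ 2

/-- A set-valued map is Hausdorff-continuous on `[0,T]`. -/
def HausdorffCts {H : Type*} [NormedAddCommGroup H] (T : ℝ) (C : ℝ → Set H) : Prop :=
  ∀ ε > 0, ∃ δ > 0, ∀ s ∈ Icc (0:ℝ) T, ∀ t ∈ Icc (0:ℝ) T, |s - t| < δ →
    EMetric.hausdorffEdist (C s) (C t) < ENNReal.ofReal ε

/-- Condition (H4) with constants `r, L`. -/
def CondH4 {H : Type*} [NormedAddCommGroup H] [InnerProductSpace ℝ H]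
    (T : ℝ) (C : ℝ → Set H) (r L : ℝ) : Prop :=
  ∀ t ∈ Icc (0:ℝ) T, ∀ x ∈ frontier (C t), ∃ z : H,
    convexHull ℝ ({x} ∪ ball z (2 * r)) ⊆ C t ∧ ‖z - x‖ ≤ L * r

/-!
Scaling the cone of (H4) at `x̄ + h(t̄)` down gives a ball `B(z, 4𝔯) ⊆ C(t̄)` with
`‖x̄ + h(t̄) - z‖ ≤ 2L𝔯`, and (ii) holds once `𝔯` is small compared with `ρ / L²`. For (i), a
`ρ`-prox-regular set `C(t)` such that every point of `C(t̄)` is `𝔯`-close to it must contain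
`B(z, 2𝔯)`: otherwise, next to a point of that ball outside `C(t)` there is a point `p' ∉ C(t)`
with a nearest point `q` in `C(t)`, giving a unit proximal normal `u` at `q`; the point `p' + 𝔯u`
lies in `C(t̄)`, and its `𝔯`-neighbour in `C(t)` falls into the ball `B(q + ρu, ρ)`, which
prox-regularity keeps disjoint from `C(t)`. Equicontinuity of `A` absorbs the shift by
`h(t) - h(t̄)`.

In a Hilbert space, points having a nearest point in a closed set are dense: move a fraction `t_n`
of the way towards a `t_n³`-nearest point. The parallelogram law makes the approximate nearest
points move by `O(t_n)`, so for summable `t_n` both sequences converge, and the limits are a point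
and its nearest point.
-/

open Filter Topology AffineMap

section Hilbert

variable {H : Type*} [NormedAddCommGroup H] [InnerProductSpace ℝ H] {S : Set H}

lemma mul_norm_sub_sq_le_of_norm_sub_smul_le {u v : H} {t δ : ℝ}
    (h : ‖u - t • v‖ ≤ (1 - t) * ‖v‖ + δ) :
    t * ‖u - v‖ ^ 2 ≤ (1 - t) * (‖v‖ ^ 2 - ‖u‖ ^ 2 + 2 * ‖v‖ * δ) + δ ^ 2 := by
  have hid : t * ‖u - v‖ ^ 2 =
      ‖u - t • v‖ ^ 2 + t * (1 - t) * ‖v‖ ^ 2 - (1 - t) * ‖u‖ ^ 2 := by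
    rw [norm_sub_sq_real, norm_sub_sq_real, real_inner_smul_right, norm_smul, mul_pow,
      Real.norm_eq_abs, sq_abs]
    ring
  rw [hid]
  linear_combination pow_le_pow_left₀ (norm_nonneg _) h 2

lemma infDist_lineMap_le {p q : H} {t : ℝ} (hq : q ∈ S) (ht : t ≤ 1) :
    infDist (lineMap p q t) S ≤ (1 - t) * dist p q :=
  calc infDist (lineMap p q t) S ≤ dist (lineMap p q t) q := infDist_le_dist_of_mem hq
    _ = (1 - t) * dist p q := by rw [dist_lineMap_right, Real.norm_of_nonneg (by linarith)]

/-- Moving from `p` towards an `ε`-nearest point `q` pins down the `δ`-nearest points of the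
new position close to `q`. -/
lemma mul_dist_sq_le_of_approx_nearest {p q q' : H} {t ε δ : ℝ} (hq : q ∈ S)
    (hpq : dist p q ≤ infDist p S + ε) (ht₀ : 0 ≤ t) (ht₁ : t ≤ 1) (hq' : q' ∈ S)
    (hpq' : dist (lineMap p q t) q' ≤ infDist (lineMap p q t) S + δ) :
    t * dist q q' ^ 2 ≤ 2 * dist p q * (ε + δ) + δ ^ 2 := by
  have hq'_far : dist p q - ε ≤ dist p q' := by
    linarith [infDist_le_dist_of_mem (x := p) hq']
  have hε : 0 ≤ ε := by linarith [infDist_le_dist_of_mem (x := p) hq]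
  have hδ : 0 ≤ δ := by linarith [infDist_le_dist_of_mem (x := lineMap p q t) hq']
  have hpin : ‖(q' - p) - t • (q - p)‖ ≤ (1 - t) * ‖q - p‖ + δ := by
    have : (q' - p) - t • (q - p) = q' - lineMap p q t := by
      rw [lineMap_apply_module]; module
    rw [this, ← dist_eq_norm, ← dist_eq_norm, dist_comm, dist_comm q]
    linarith [infDist_lineMap_le (p := p) hq ht₁]
  have key := mul_norm_sub_sq_le_of_norm_sub_smul_le hpin
  rw [sub_sub_sub_cancel_right, ← dist_eq_norm, ← dist_eq_norm, ← dist_eq_norm, dist_comm q' q,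
    dist_comm q p, dist_comm q' p] at key
  have hsq : dist p q ^ 2 - dist p q' ^ 2 ≤ 2 * dist p q * ε := by
    rcases le_total (dist p q') (dist p q) with h | h
    · nlinarith [dist_nonneg (x := p) (y := q')]
    · nlinarith [dist_nonneg (x := p) (y := q)]
  have hpos : 0 ≤ 2 * dist p q * (ε + δ) := by positivity
  calc t * dist q q' ^ 2
      ≤ (1 - t) * (dist p q ^ 2 - dist p q' ^ 2 + 2 * dist p q * δ) + δ ^ 2 := key
    _ ≤ (1 - t) * (2 * dist p q * (ε + δ)) + δ ^ 2 := by
        gcongr; linarith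
    _ ≤ 2 * dist p q * (ε + δ) + δ ^ 2 := by nlinarith

structure NearestPointIteration (S : Set H) (p q : ℕ → H) (t : ℕ → ℝ) : Prop where
  mem : ∀ n, q n ∈ S
  dist_le : ∀ n, dist (p n) (q n) ≤ infDist (p n) S + t n ^ 3
  succ : ∀ n, p (n + 1) = lineMap (p n) (q n) (t n)
  pos : ∀ n, 0 < t n
  le_one : ∀ n, t n ≤ 1
  antitone : Antitone t

namespace NearestPointIteration

variable {p q : ℕ → H} {t : ℕ → ℝ}

lemma pow_three_succ_le (hI : NearestPointIteration S p q t) (n : ℕ) : t (n + 1) ^ 3 ≤ t n :=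
  calc t (n + 1) ^ 3 ≤ t (n + 1) :=
        pow_le_of_le_one (hI.pos _).le (hI.le_one _) (by norm_num)
    _ ≤ t n := hI.antitone n.le_succ

lemma dist_le_max (hI : NearestPointIteration S p q t) (n : ℕ) :
    dist (p n) (q n) ≤ max (dist (p 0) (q 0)) 1 := by
  induction n with
  | zero => exact le_max_left _ _
  | succ n ih =>
    have h₁ := hI.le_one n
    calc dist (p (n + 1)) (q (n + 1)) ≤ (1 - t n) * dist (p n) (q n) + t n := by
          have := infDist_lineMap_le (p := p n) (hI.mem n) h₁
          rw [← hI.succ] at this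
          linarith [hI.dist_le (n + 1), hI.pow_three_succ_le n]
      _ ≤ (1 - t n) * max (dist (p 0) (q 0)) 1 + t n * max (dist (p 0) (q 0)) 1 := by
          gcongr
          exact le_mul_of_one_le_right (hI.pos n).le (le_max_right _ _)
      _ = max (dist (p 0) (q 0)) 1 := by ring

lemma dist_succ_left (hI : NearestPointIteration S p q t) (n : ℕ) :
    dist (p n) (p (n + 1)) = t n * dist (p n) (q n) := by
  rw [hI.succ, dist_comm, dist_lineMap_left, Real.norm_of_nonneg (hI.pos n).le]

lemma dist_succ_right_le (hI : NearestPointIteration S p q t) {B : ℝ}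
    (hB : ∀ n, dist (p n) (q n) ≤ B) (n : ℕ) :
    dist (q n) (q (n + 1)) ≤ √(4 * B + 1) * t n := by
  have htn := hI.pos n
  have hB₀ : 0 ≤ B := dist_nonneg.trans (hB 0)
  have hsucc : t (n + 1) ^ 3 ≤ t n ^ 3 :=
    pow_le_pow_left₀ (hI.pos _).le (hI.antitone n.le_succ) 3
  have hstep := mul_dist_sq_le_of_approx_nearest (hI.mem n) (hI.dist_le n) htn.le
    (hI.le_one n) (hI.mem (n + 1)) (hI.succ n ▸ hI.dist_le (n + 1))
  have hsq : dist (q n) (q (n + 1)) ^ 2 ≤ (√(4 * B + 1) * t n) ^ 2 := by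
    rw [mul_pow, Real.sq_sqrt (by positivity)]
    refine le_of_mul_le_mul_left (hstep.trans ?_) htn
    have ha : t n ^ 3 ≤ 1 := pow_le_one₀ htn.le (hI.le_one n)
    have hb : 0 ≤ t (n + 1) ^ 3 := pow_nonneg (hI.pos _).le 3
    have hm : dist (p n) (q n) * (t n ^ 3 + t (n + 1) ^ 3) ≤ B * (2 * t n ^ 3) :=
      mul_le_mul (hB n) (by linarith) (by positivity) hB₀
    nlinarith
  exact (pow_le_pow_iff_left₀ dist_nonneg (by positivity) two_ne_zero).mp hsq

lemma dist_eq_infDist_of_tendsto (hI : NearestPointIteration S p q t) (hS : IsClosed S)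
    {p' q' : H} (hp : Tendsto p atTop (𝓝 p')) (hq : Tendsto q atTop (𝓝 q'))
    (ht : Tendsto t atTop (𝓝 0)) :
    q' ∈ S ∧ dist p' q' = infDist p' S := by
  have hq'S : q' ∈ S := hS.mem_of_tendsto hq (Eventually.of_forall hI.mem)
  refine ⟨hq'S, le_antisymm ?_ (infDist_le_dist_of_mem hq'S)⟩
  have hlim : Tendsto (fun n => infDist (p n) S + t n ^ 3) atTop (𝓝 (infDist p' S + 0 ^ 3)) :=
    (((continuous_infDist_pt S).tendsto p').comp hp).add (ht.pow 3)
  simpa using le_of_tendsto_of_tendsto' (hp.dist hq) hlim hI.dist_le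

end NearestPointIteration

theorem exists_dist_le_and_dist_eq_infDist [CompleteSpace H] (hS : IsClosed S)
    (hne : S.Nonempty) (p : H) {η : ℝ} (hη : 0 < η) :
    ∃ p', dist p p' ≤ η ∧ ∃ q ∈ S, dist p' q = infDist p' S := by
  set B := infDist p S + 2
  have hB : 0 < B := by linarith [infDist_nonneg (x := p) (s := S)]
  set τ := min 1 (η / (2 * B))
  have hτ : 0 < τ := lt_min one_pos (by positivity)
  set t : ℕ → ℝ := fun n => τ * (1 / 2) ^ n
  have ht : Summable t := summable_geometric_two.mul_left τ
  have ht₀ : ∀ n, 0 < t n := fun n => by positivity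
  choose E hES hEd using fun (x : H) (n : ℕ) =>
    (infDist_lt_iff hne).mp (lt_add_of_pos_right (infDist x S) (pow_pos (ht₀ n) 3))
  let P : ℕ → H := fun n => Nat.rec p (fun n x => lineMap x (E x n) (t n)) n
  have hI : NearestPointIteration S P (fun n => E (P n) n) t :=
    { mem := fun n => hES _ n
      dist_le := fun n => (hEd _ n).le
      succ := fun n => rfl
      pos := ht₀
      le_one := fun n => (mul_le_of_le_one_right hτ.le
        (pow_le_one₀ (by norm_num) (by norm_num))).trans (min_le_left _ _)
      antitone := fun m n hmn => mul_le_mul_of_nonneg_left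
        (pow_le_pow_of_le_one (by norm_num) (by norm_num) hmn) hτ.le }
  have hPB : ∀ n, dist (P n) (E (P n) n) ≤ B := by
    refine fun n => (hI.dist_le_max n).trans
      (max_le ?_ (by linarith [infDist_nonneg (x := p) (s := S)]))
    change dist p (E p 0) ≤ infDist p S + 2
    linarith [hEd p 0, pow_le_one₀ (ht₀ 0).le (hI.le_one 0) (n := 3)]
  have hPstep : ∀ n, dist (P n) (P (n + 1)) ≤ t n * B := fun n =>
    (hI.dist_succ_left n).trans_le (mul_le_mul_of_nonneg_left (hPB n) (ht₀ n).le)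
  obtain ⟨p', hp'⟩ := cauchySeq_tendsto_of_complete
    (cauchySeq_of_dist_le_of_summable _ hPstep (ht.mul_right B))
  obtain ⟨q', hq'⟩ := cauchySeq_tendsto_of_complete
    (cauchySeq_of_dist_le_of_summable _ (hI.dist_succ_right_le hPB) (ht.mul_left _))
  obtain ⟨hq'S, hdist⟩ := hI.dist_eq_infDist_of_tendsto hS hp' hq' ht.tendsto_atTop_zero
  refine ⟨p', ?_, q', hq'S, hdist⟩
  calc dist p p' ≤ ∑' n, t n * B :=
        dist_le_tsum_of_dist_le_of_tendsto₀ _ hPstep (ht.mul_right B) hp'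
    _ = 2 * τ * B := by rw [tsum_mul_right, tsum_mul_left, tsum_geometric_two]; ring
    _ ≤ η := by
      have := min_le_right 1 (η / (2 * B))
      rw [le_div_iff₀ (by positivity)] at this
      linarith

lemma dist_add_smul_add_smul_of_norm_eq_one {q u : H} (hu : ‖u‖ = 1) (a b : ℝ) :
    dist (q + a • u) (q + b • u) = |a - b| := by
  rw [dist_add_left, dist_eq_norm, ← sub_smul, norm_smul, hu, mul_one, Real.norm_eq_abs]

lemma smul_mem_proxNormalCone {x ζ : H} (hζ : ζ ∈ proxNormalCone S x) {c : ℝ} (hc : 0 ≤ c) :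
    c • ζ ∈ proxNormalCone S x := by
  obtain ⟨σ, hσ, h⟩ := hζ
  refine ⟨c * σ, mul_nonneg hc hσ, fun y hy => ?_⟩
  rw [real_inner_smul_left, mul_assoc]
  exact mul_le_mul_of_nonneg_left (h y hy) hc

lemma sub_mem_proxNormalCone_of_dist_eq_infDist {p q : H}
    (h : dist p q = infDist p S) : p - q ∈ proxNormalCone S q := by
  refine ⟨1 / 2, by norm_num, fun y hy => ?_⟩
  have hle : ‖p - q‖ ^ 2 ≤ ‖(p - q) - (y - q)‖ ^ 2 := by
    rw [sub_sub_sub_cancel_right, ← dist_eq_norm, ← dist_eq_norm, h]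
    exact pow_le_pow_left₀ infDist_nonneg (infDist_le_dist_of_mem hy) 2
  rw [norm_sub_sq_real (p - q) (y - q)] at hle
  linarith

lemma UniformProxRegular.le_dist_add_smul {ρ : ℝ} (hreg : UniformProxRegular ρ S) (hρ : 0 < ρ)
    {q u x : H} (hq : q ∈ S) (hu : u ∈ proxNormalCone S q) (hu₁ : ‖u‖ = 1) (hx : x ∈ S) :
    ρ ≤ dist x (q + ρ • u) := by
  have h := mul_le_mul_of_nonneg_left (hreg q hq u hu x hx) (by positivity : 0 ≤ 2 * ρ)
  rw [hu₁, ← mul_assoc, mul_one_div_cancel (by positivity), one_mul] at h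
  have hsq : ρ ^ 2 ≤ dist x (q + ρ • u) ^ 2 := by
    rw [dist_eq_norm, show x - (q + ρ • u) = (x - q) - ρ • u by abel, norm_sub_sq_real,
      real_inner_smul_right, norm_smul, Real.norm_of_nonneg hρ.le, hu₁, real_inner_comm]
    linarith
  exact (pow_le_pow_iff_left₀ hρ.le dist_nonneg two_ne_zero).mp hsq

theorem UniformProxRegular.ball_subset [CompleteSpace H] {ρ ε r : ℝ} {S' : Set H} {z : H}
    (hreg : UniformProxRegular ρ S') (hS' : IsClosed S') (hne : S'.Nonempty) (hε : 0 < ε)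
    (hρ : 3 * ε ≤ ρ) (hnear : ∀ u ∈ S, infDist u S' < ε) (hball : ball z (r + 2 * ε) ⊆ S) :
    ball z r ⊆ S' := by
  intro p hp
  by_contra hpS'
  have hd : 0 < infDist p S' := (hS'.notMem_iff_infDist_pos hne).mp hpS'
  have hdε : infDist p S' < ε := hnear p (hball (ball_subset_ball (by linarith) hp))
  obtain ⟨p', hpp', q, hq, hD⟩ := exists_dist_le_and_dist_eq_infDist hS' hne p (half_pos hd)
  set D := dist p' q
  have hD₀ : 0 < D := by
    linarith [infDist_le_infDist_add_dist (x := p) (y := p') (s := S')]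
  have hD₁ : D < 2 * ε := by
    linarith [infDist_le_infDist_add_dist (x := p') (y := p) (s := S'), dist_comm p p']
  set u := D⁻¹ • (p' - q)
  have hu₁ : ‖u‖ = 1 := by
    rw [norm_smul, ← dist_eq_norm, norm_inv, Real.norm_of_nonneg hD₀.le, inv_mul_cancel₀ hD₀.ne']
  have hp' : p' = q + D • u := by
    rw [smul_smul, mul_inv_cancel₀ hD₀.ne', one_smul, add_sub_cancel]
  have huN : u ∈ proxNormalCone S' q := smul_mem_proxNormalCone
    (sub_mem_proxNormalCone_of_dist_eq_infDist hD) (inv_nonneg.2 hD₀.le)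
  set w := q + (D + ε) • u
  have hwS : w ∈ S := by
    refine hball (mem_ball.2 ?_)
    have hwp' : dist w p' = ε := by
      rw [hp', dist_add_smul_add_smul_of_norm_eq_one hu₁, add_sub_cancel_left, abs_of_pos hε]
    linarith [dist_triangle4 w p' p z, mem_ball.1 hp, dist_comm p p']
  obtain ⟨x, hx, hwx⟩ := (infDist_lt_iff hne).mp (hnear w hwS)
  have hwc : dist w (q + ρ • u) = ρ - (D + ε) := by
    rw [dist_add_smul_add_smul_of_norm_eq_one hu₁, abs_of_nonpos (by linarith), neg_sub]
  linarith [hreg.le_dist_add_smul (by linarith) hq huN hu₁ hx, dist_triangle x w (q + ρ • u),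
    dist_comm w x]

end Hilbert

section Normed

variable {E : Type*} [NormedAddCommGroup E]

lemma Convex.ball_lineMap_subset [NormedSpace ℝ E] {K : Set E} (hK : Convex ℝ K) {x z : E}
    {R c : ℝ} (hx : x ∈ K) (hball : ball z R ⊆ K) (hc₀ : 0 < c) (hc₁ : c ≤ 1) :
    ball (lineMap x z c) (c * R) ⊆ K := by
  intro u hu
  set b := z + c⁻¹ • (u - lineMap x z c)
  have hb : b ∈ ball z R := by
    rw [mem_ball, dist_self_add_left, norm_smul, norm_inv, Real.norm_of_nonneg hc₀.le,
      ← dist_eq_norm, inv_mul_lt_iff₀ hc₀]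
    exact hu
  have hub : lineMap x b c = u := by
    simp only [b, lineMap_apply_module, smul_add, smul_smul, mul_inv_cancel₀ hc₀.ne', one_smul]
    abel
  exact hub ▸ hK.lineMap_mem hx (hball hb) ⟨hc₀.le, hc₁⟩

lemma frontier_image_sub_const {G : Type*} [TopologicalSpace G] [AddGroup G]
    [IsTopologicalAddGroup G] (S : Set G) (a : G) :
    frontier ((· - a) '' S) = (· - a) '' frontier S :=
  ((Homeomorph.subRight a).image_frontier S).symm

lemma ball_sub_subset_image_sub {K : Set E} {c a b : E} {r : ℝ}
    (h : ball c (r + dist b a) ⊆ K) : ball (c - a) r ⊆ (· - b) '' K := by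
  intro u hu
  refine ⟨u + b, h ?_, add_sub_cancel_right u b⟩
  rw [mem_ball, dist_eq_norm, show u + b - c = (u - (c - a)) + (b - a) by abel]
  refine (norm_add_le _ _).trans_lt ?_
  rw [← dist_eq_norm, ← dist_eq_norm]
  linarith [mem_ball.1 hu]

lemma HausdorffCts.exists_forall_infDist_lt {T : ℝ} {C : ℝ → Set E} (hC : HausdorffCts T C)
    {ε : ℝ} (hε : 0 < ε) :
    ∃ δ > 0, ∀ s ∈ Icc (0:ℝ) T, ∀ t ∈ Icc (0:ℝ) T, |s - t| < δ →
      ∀ u ∈ C s, infDist u (C t) < ε := by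
  obtain ⟨δ, hδ, h⟩ := hC ε hε
  refine ⟨δ, hδ, fun s hs t ht hst u hu => ?_⟩
  have hst := h s hs t ht hst
  exact (infDist_le_hausdorffDist_of_mem hu hst.ne_top).trans_lt
    (ENNReal.toReal_lt_of_lt_ofReal hst)

lemma CondH4.exists_ball_subset [InnerProductSpace ℝ E] {T r L : ℝ} {C : ℝ → Set E}
    (hC : CondH4 T C r L) {t : ℝ} (ht : t ∈ Icc 0 T) {x : E} (hx : x ∈ frontier (C t))
    {s : ℝ} (hs₀ : 0 < s) (hs : s ≤ r) :
    ∃ z, ball z (2 * s) ⊆ C t ∧ dist x z ≤ L * s := by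
  obtain ⟨z, hconv, hz⟩ := hC t ht x hx
  have hr : 0 < r := hs₀.trans_le hs
  refine ⟨lineMap x z (s / r), ?_, ?_⟩
  · have := (convex_convexHull ℝ ({x} ∪ ball z (2 * r))).ball_lineMap_subset
      (subset_convexHull ℝ _ (Or.inl rfl)) (subset_union_right.trans (subset_convexHull ℝ _))
      (div_pos hs₀ hr) ((div_le_one hr).2 hs)
    rw [show s / r * (2 * r) = 2 * s by field_simp] at this
    exact this.trans hconv
  · rw [dist_comm, dist_lineMap_left, Real.norm_of_nonneg (div_pos hs₀ hr).le, dist_comm,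
      dist_eq_norm]
    calc s / r * ‖z - x‖ ≤ s / r * (L * r) := by gcongr
      _ = L * s := by field_simp

end Normed

theorem stmt15_general {H : Type*} [NormedAddCommGroup H] [InnerProductSpace ℝ H] [CompleteSpace H]
    (T : ℝ) (C : ℝ → Set H)
    (ρ : ℝ) (hρ : 0 < ρ)
    (hH1 : ∀ t ∈ Icc (0:ℝ) T, (C t).Nonempty ∧ IsClosed (C t) ∧ UniformProxRegular ρ (C t))
    (hH2 : HausdorffCts T C)
    (hH4 : ∃ r > 0, ∃ L > 0, CondH4 T C r L)
    (A : Set (ℝ → H))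
    (hequi : ∀ ε > 0, ∃ δ > 0, ∀ h ∈ A, ∀ s ∈ Icc (0:ℝ) T, ∀ t ∈ Icc (0:ℝ) T,
      |s - t| < δ → ‖h s - h t‖ < ε) :
    ∃ δ > 0, ∃ 𝔯 > 0, ∀ h ∈ A, ∀ tbar ∈ Icc (0:ℝ) T,
      ∀ xbar ∈ frontier ((· - h tbar) '' C tbar), ∃ z : H,
        (∀ t ∈ Icc (0:ℝ) T, |t - tbar| < δ → ball z 𝔯 ⊆ (· - h t) '' C t) ∧
        1 / ρ * (‖xbar - z‖ + 𝔯) ^ 2 < 𝔯 / 2 := by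
  obtain ⟨r, hr, L, hL, hH4⟩ := hH4
  set 𝔯 := min (r / 4) (ρ / (4 * (2 * L + 1) ^ 2))
  have h𝔯 : 0 < 𝔯 := lt_min (by positivity) (by positivity)
  have h𝔯ρ : 𝔯 * (4 * (2 * L + 1) ^ 2) ≤ ρ := (le_div_iff₀ (by positivity)).1 (min_le_right _ _)
  have h3𝔯 : 3 * 𝔯 ≤ ρ := by
    nlinarith [one_le_pow₀ (n := 2) (by linarith : (1:ℝ) ≤ 2 * L + 1)]
  obtain ⟨δ₁, hδ₁, hC⟩ := hH2.exists_forall_infDist_lt h𝔯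
  obtain ⟨δ₂, hδ₂, hh⟩ := hequi 𝔯 h𝔯
  refine ⟨min δ₁ δ₂, lt_min hδ₁ hδ₂, 𝔯, h𝔯, fun h hA tbar htbar xbar hxbar => ?_⟩
  rw [frontier_image_sub_const] at hxbar
  obtain ⟨x, hx, rfl⟩ := hxbar
  obtain ⟨z, hball, hxz⟩ := hH4.exists_ball_subset htbar hx (by positivity : 0 < 2 * 𝔯)
    (by linarith [min_le_left (r / 4) (ρ / (4 * (2 * L + 1) ^ 2))])
  refine ⟨z - h tbar, fun t ht htδ => ?_, ?_⟩
  · obtain ⟨hne, hclosed, hreg⟩ := hH1 t ht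
    have hsub : ball z (2 * 𝔯) ⊆ C t := hreg.ball_subset hclosed hne h𝔯 h3𝔯
      (hC tbar htbar t ht (by rw [abs_sub_comm]; exact htδ.trans_le (min_le_left _ _)))
      (by rwa [show 2 * 𝔯 + 2 * 𝔯 = 2 * (2 * 𝔯) by ring])
    refine ball_sub_subset_image_sub (ball_subset_ball ?_ |>.trans hsub)
    linarith [dist_eq_norm (h t) (h tbar),
      hh h hA t ht tbar htbar (htδ.trans_le (min_le_right _ _))]
  · rw [sub_sub_sub_cancel_right, ← dist_eq_norm]
    have hsq : (dist x z + 𝔯) ^ 2 ≤ ((2 * L + 1) * 𝔯) ^ 2 := by gcongr; linarith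
    rw [one_div_mul_eq_div, div_lt_iff₀ hρ]
    nlinarith

theorem stmt15 {H : Type*} [NormedAddCommGroup H] [InnerProductSpace ℝ H] [CompleteSpace H]
    (T : ℝ) (hT : 0 < T) (C : ℝ → Set H)
    (ρ : ℝ) (hρ : 0 < ρ)
    (hH1 : ∀ t ∈ Icc (0:ℝ) T, (C t).Nonempty ∧ IsClosed (C t) ∧ UniformProxRegular ρ (C t))
    (hH2 : HausdorffCts T C)
    (hH4 : ∃ r > 0, ∃ L > 0, CondH4 T C r L)
    (A : Set (ℝ → H))
    (hcont : ∀ h ∈ A, ContinuousOn h (Icc 0 T))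
    (hzero : ∀ h ∈ A, h 0 = 0)
    (hequi : ∀ ε > 0, ∃ δ > 0, ∀ h ∈ A, ∀ s ∈ Icc (0:ℝ) T, ∀ t ∈ Icc (0:ℝ) T,
      |s - t| < δ → ‖h s - h t‖ < ε) :
    ∃ δ > 0, ∃ 𝔯 > 0, ∀ h ∈ A, ∀ tbar ∈ Icc (0:ℝ) T,
      ∀ xbar ∈ frontier ((· - h tbar) '' C tbar), ∃ z : H,
        (∀ t ∈ Icc (0:ℝ) T, |t - tbar| < δ → ball z 𝔯 ⊆ (· - h t) '' C t) ∧
        1 / ρ * (‖xbar - z‖ + 𝔯) ^ 2 < 𝔯 / 2 :=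
  stmt15_general T C ρ hρ hH1 hH2 hH4 A hequi
end

section
/- Let a < b be real numbers, μ a finite Borel measure on [a,b], ε > 0, and let f : [a,b] → ℝ be a bounded, Borel measurable, right-continuous function satisfying 0 ≤ f(t) ≤ ε + ∫_{[a,t)} f dμ for all t ∈ [a,b]. Then f(t) ≤ ε·exp(μ([a,t))) for all t ∈ [a,b]. -/
/-!
Write `g t = μ [a, t)`. Since `g` is nondecreasing and left-continuous, the superlevel set
`{s ∈ [a, t) | x ≤ g s}` has `μ`-measure at most `g t - x`: the push-forward of `μ` on `[a, t)`
under `g` is dominated by Lebesgue measure on `[0, g t]`. The layer-cake formula then gives the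
chain-rule inequality `∫_{[a,t)} exp ∘ g dμ ≤ exp (g t) - 1`. Hence a bound `f ≤ K exp g` on
`[a, b]` improves to `f ≤ ε + K (exp g - 1)`, that is `f exp (-g) ≤ K - (K - ε) exp (-g)`;
for `K = sup f exp (-g)` this forces `K ≤ ε`.
-/

open Set MeasureTheory Filter Real

theorem integral_sub_mul_exp (G : ℝ) : ∫ x in 0..G, (G - x) * exp x = exp G - G - 1 := by
  have hderiv : ∀ x, HasDerivAt (fun y => (G - y + 1) * exp y) ((G - x) * exp x) x := fun x =>
    ((((hasDerivAt_id' x).const_sub G).add_const 1).fun_mul (hasDerivAt_exp x)).congr_deriv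
      (by ring)
  rw [intervalIntegral.integral_eq_sub_of_hasDerivAt (fun x _ => hderiv x)
    ((by fun_prop : Continuous fun x => (G - x) * exp x).intervalIntegrable _ _)]
  simp only [sub_self, zero_add, one_mul, sub_zero, exp_zero, mul_one]; ring

theorem lintegral_Ioi_ofReal_sub_mul_exp {G : ℝ} (hG : 0 ≤ G) :
    ∫⁻ x in Ioi 0, ENNReal.ofReal (G - x) * ENNReal.ofReal (exp x) =
      ENNReal.ofReal (exp G - G - 1) := by
  simp_rw [← ENNReal.ofReal_mul' (exp_pos _).le]
  rw [← Ioc_union_Ioi_eq_Ioi hG, lintegral_union measurableSet_Ioi (Ioc_disjoint_Ioi le_rfl),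
    setLIntegral_congr_fun measurableSet_Ioi (g := fun _ => 0) fun x hx => ENNReal.ofReal_eq_zero.2
      (mul_nonpos_of_nonpos_of_nonneg (sub_nonpos.2 hx.le) (exp_pos x).le),
    lintegral_zero, add_zero, ← ofReal_integral_eq_lintegral_ofReal,
    ← intervalIntegral.integral_of_le hG, integral_sub_mul_exp]
  · exact (by fun_prop : Continuous fun x => (G - x) * exp x).integrableOn_Ioc
  · exact (ae_restrict_iff' measurableSet_Ioc).2 (Eventually.of_forall fun x hx =>
      mul_nonneg (sub_nonneg.2 hx.2) (exp_pos x).le)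

section
variable {μ : Measure ℝ} [IsFiniteMeasure μ] {a : ℝ}

theorem monotone_measureReal_Ico : Monotone fun s => μ.real (Ico a s) :=
  fun _ _ h => measureReal_mono (Ico_subset_Ico_right h)

theorem le_measure_Icc_of_forall_mem_Ioo {v : ENNReal} {c t : ℝ} (hct : c < t)
    (h : ∀ r ∈ Ioo c t, v ≤ μ (Ico a r)) : v ≤ μ (Icc a c) := by
  have hInter : ⋂ r > c, Ico a r = Icc a c := by
    ext s
    simp only [mem_iInter, mem_Ico, mem_Icc]
    exact ⟨fun hs => ⟨(hs (c + 1) (by linarith)).1, le_of_forall_gt fun r hr => (hs r hr).2⟩,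
      fun hs r hr => ⟨hs.1, hs.2.trans_lt hr⟩⟩
  have hlim := tendsto_measure_biInter_gt (μ := μ) (s := fun r => Ico a r) (a := c)
    (fun _ _ => nullMeasurableSet_Ico) (fun _ _ _ hij => Ico_subset_Ico_right hij)
    ⟨t, hct, measure_ne_top μ _⟩
  rw [hInter] at hlim
  exact ge_of_tendsto hlim (eventually_of_mem (Ioo_mem_nhdsGT hct) h)

theorem ofReal_le_measure_Ico_diff_setOf_le {x t : ℝ}
    (hS : ∃ s ∈ Ico a t, x ≤ μ.real (Ico a s)) :
    ENNReal.ofReal x ≤ μ (Ico a t \ {s | x ≤ μ.real (Ico a s)}) := by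
  set S := Ico a t ∩ {s | x ≤ μ.real (Ico a s)}
  obtain ⟨s₀, hs₀⟩ : S.Nonempty := hS
  have hbdd : BddBelow S := ⟨a, fun s hs => hs.1.1⟩
  have hct : sInf S < t := (csInf_le hbdd hs₀).trans_lt hs₀.1.2
  have hbelow : Ico a (sInf S) ⊆ Ico a t \ {s | x ≤ μ.real (Ico a s)} := fun s hs =>
    ⟨⟨hs.1, hs.2.trans hct⟩, fun hxs => hs.2.not_ge (csInf_le hbdd ⟨⟨hs.1, hs.2.trans hct⟩, hxs⟩)⟩
  -- `g` is only left-continuous, so the sublevel set is `[a, sInf S)` or `[a, sInf S]`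
  by_cases hc : x ≤ μ.real (Ico a (sInf S))
  · calc ENNReal.ofReal x ≤ ENNReal.ofReal (μ.real (Ico a (sInf S))) := ENNReal.ofReal_le_ofReal hc
      _ = μ (Ico a (sInf S)) := ofReal_measureReal
      _ ≤ _ := measure_mono hbelow
  · have hIcc : Icc a (sInf S) ⊆ Ico a t \ {s | x ≤ μ.real (Ico a s)} := fun s hs =>
      hs.2.lt_or_eq.elim (fun h => hbelow ⟨hs.1, h⟩) fun h => ⟨⟨hs.1, h ▸ hct⟩, h ▸ hc⟩
    refine (le_measure_Icc_of_forall_mem_Ioo hct fun r hr => ?_).trans (measure_mono hIcc)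
    obtain ⟨s, hs, hsr⟩ := exists_lt_of_csInf_lt ⟨s₀, hs₀⟩ hr.1
    rw [← ofReal_measureReal]
    exact ENNReal.ofReal_le_ofReal (hs.2.trans (monotone_measureReal_Ico hsr.le))

theorem measure_Ico_inter_setOf_le_le {x t : ℝ} (hx : 0 ≤ x) :
    μ (Ico a t ∩ {s | x ≤ μ.real (Ico a s)}) ≤ ENNReal.ofReal (μ.real (Ico a t) - x) := by
  by_cases hS : ∃ s ∈ Ico a t, x ≤ μ.real (Ico a s)
  · rw [ENNReal.ofReal_sub _ hx, ofReal_measureReal, ← measure_inter_add_sdiff (Ico a t)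
      (measurableSet_le measurable_const (monotone_measureReal_Ico (μ := μ) (a := a)).measurable)]
    exact ENNReal.le_sub_of_add_le_right ENNReal.ofReal_ne_top
      (add_le_add le_rfl (ofReal_le_measure_Ico_diff_setOf_le hS))
  · push Not at hS
    rw [show Ico a t ∩ {s | x ≤ μ.real (Ico a s)} = ∅ from
      eq_empty_of_forall_notMem fun s hs => (hS s hs.1).not_ge hs.2, measure_empty]
    exact zero_le

theorem lintegral_ofReal_exp_measureReal_Ico_sub_one_le (t : ℝ) :
    ∫⁻ s in Ico a t, ENNReal.ofReal (exp (μ.real (Ico a s)) - 1) ∂μ ≤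
      ENNReal.ofReal (exp (μ.real (Ico a t)) - μ.real (Ico a t) - 1) := by
  have hmeas : Measurable fun s => μ.real (Ico a s) := monotone_measureReal_Ico.measurable
  have hlayer := lintegral_comp_eq_lintegral_meas_le_mul (μ.restrict (Ico a t))
    (Eventually.of_forall fun s => measureReal_nonneg) hmeas.aemeasurable
    (fun u _ => continuous_exp.intervalIntegrable 0 u)
    (Eventually.of_forall fun x => (exp_pos x).le)
  simp only [integral_exp, exp_zero] at hlayer
  rw [hlayer, ← lintegral_Ioi_ofReal_sub_mul_exp measureReal_nonneg]
  refine setLIntegral_mono' measurableSet_Ioi fun x hx => ?_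
  rw [Measure.restrict_apply (measurableSet_le measurable_const hmeas), inter_comm]
  gcongr
  exact measure_Ico_inter_setOf_le_le hx.le

theorem integral_exp_measureReal_Ico_le (t : ℝ) :
    ∫ s in Ico a t, exp (μ.real (Ico a s)) ∂μ ≤ exp (μ.real (Ico a t)) - 1 := by
  set G := μ.real (Ico a t)
  have hG : 0 ≤ G := measureReal_nonneg
  have hsplit : ∀ s, ENNReal.ofReal (exp (μ.real (Ico a s))) =
      ENNReal.ofReal (exp (μ.real (Ico a s)) - 1) + 1 := fun s => by
    rw [← ENNReal.ofReal_one, ← ENNReal.ofReal_add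
      (sub_nonneg.2 (one_le_exp measureReal_nonneg)) zero_le_one, sub_add_cancel]
  have hlint : ∫⁻ s in Ico a t, ENNReal.ofReal (exp (μ.real (Ico a s))) ∂μ ≤
      ENNReal.ofReal (exp G - 1) := by
    calc ∫⁻ s in Ico a t, ENNReal.ofReal (exp (μ.real (Ico a s))) ∂μ
        = ∫⁻ s in Ico a t, ENNReal.ofReal (exp (μ.real (Ico a s)) - 1) ∂μ + μ (Ico a t) := by
          simp only [hsplit]
          rw [lintegral_add_right _ measurable_const, setLIntegral_const, one_mul]
      _ ≤ ENNReal.ofReal (exp G - G - 1) + ENNReal.ofReal G := by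
          rw [ofReal_measureReal]
          gcongr
          exact lintegral_ofReal_exp_measureReal_Ico_sub_one_le t
      _ = ENNReal.ofReal (exp G - 1) := by
          rw [← ENNReal.ofReal_add (by linarith [add_one_le_exp G]) hG]
          congr 1
          ring
  rw [integral_eq_lintegral_of_nonneg_ae (Eventually.of_forall fun s => (exp_pos _).le)
    (monotone_measureReal_Ico.measurable.exp.aestronglyMeasurable)]
  exact ENNReal.toReal_le_of_le_ofReal (sub_nonneg.2 (one_le_exp hG)) hlint

theorem setIntegral_Ico_le_mul_exp_measureReal_Ico_sub_one {t K : ℝ} {f : ℝ → ℝ} (hK : 0 ≤ K)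
    (hf : IntegrableOn f (Ico a t) μ)
    (hfK : ∀ s ∈ Ico a t, f s ≤ K * exp (μ.real (Ico a s))) :
    ∫ s in Ico a t, f s ∂μ ≤ K * (exp (μ.real (Ico a t)) - 1) := by
  have hexp : IntegrableOn (fun s => exp (μ.real (Ico a s))) (Ico a t) μ :=
    Integrable.of_bound monotone_measureReal_Ico.measurable.exp.aestronglyMeasurable
      (exp (μ.real univ)) (Eventually.of_forall fun s => by
        rw [norm_of_nonneg (exp_pos _).le]
        exact exp_le_exp.2 (measureReal_mono (subset_univ _)))
  calc ∫ s in Ico a t, f s ∂μ ≤ ∫ s in Ico a t, K * exp (μ.real (Ico a s)) ∂μ :=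
        setIntegral_mono_on hf (hexp.const_mul K) measurableSet_Ico hfK
    _ = K * ∫ s in Ico a t, exp (μ.real (Ico a s)) ∂μ := integral_const_mul K _
    _ ≤ K * (exp (μ.real (Ico a t)) - 1) := by gcongr; exact integral_exp_measureReal_Ico_le t

end

theorem le_mul_exp_of_self_improving_bound {α : Type*} {A : Set α} {f g : α → ℝ} {ε L : ℝ}
    (hf : ∀ t ∈ A, 0 ≤ f t) (hf_bdd : BddAbove (f '' A)) (hg : ∀ t ∈ A, g t ∈ Icc 0 L)
    (himp : ∀ K, 0 ≤ K → (∀ t ∈ A, f t ≤ K * exp (g t)) → ∀ t ∈ A, f t ≤ ε + K * (exp (g t) - 1)) :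
    ∀ t ∈ A, f t ≤ ε * exp (g t) := by
  intro t₀ ht₀
  set φ := fun t => f t / exp (g t)
  have hφ_bdd : BddAbove (φ '' A) := by
    obtain ⟨M, hM⟩ := hf_bdd
    refine ⟨M, forall_mem_image.2 fun t ht => ?_⟩
    exact (div_le_self (hf t ht) (one_le_exp (hg t ht).1)).trans (hM (mem_image_of_mem f ht))
  set K := sSup (φ '' A)
  have hfK : ∀ t ∈ A, f t ≤ K * exp (g t) := fun t ht =>
    (div_le_iff₀ (exp_pos _)).1 (le_csSup hφ_bdd (mem_image_of_mem φ ht))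
  have hK : 0 ≤ K :=
    (div_nonneg (hf t₀ ht₀) (exp_pos _).le).trans (le_csSup hφ_bdd (mem_image_of_mem φ ht₀))
  have hKε : K ≤ ε := by
    by_contra! hεK
    have hφ : ∀ t ∈ A, φ t ≤ K - (K - ε) / exp L := fun t ht => by
      have hstep := himp K hK hfK t ht
      have hdecay : (K - ε) / exp L * exp (g t) ≤ K - ε := by
        rw [div_mul_eq_mul_div, div_le_iff₀ (exp_pos _)]
        exact mul_le_mul_of_nonneg_left (exp_le_exp.2 (hg t ht).2) (sub_nonneg.2 hεK.le)
      rw [div_le_iff₀ (exp_pos _)]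
      nlinarith
    have hKle := csSup_le ⟨_, mem_image_of_mem φ ht₀⟩ (forall_mem_image.2 hφ)
    have hgap : 0 < (K - ε) / exp L := div_pos (sub_pos.2 hεK) (exp_pos L)
    linarith
  calc f t₀ ≤ K * exp (g t₀) := hfK t₀ ht₀
    _ ≤ ε * exp (g t₀) := by gcongr

theorem stmt16_general (a b : ℝ)
    (μ : Measure ℝ) [IsFiniteMeasure μ]
    (ε : ℝ)
    (f : ℝ → ℝ) (hmeas : Measurable f)
    (hbdd : ∃ M : ℝ, ∀ t ∈ Icc a b, |f t| ≤ M)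
    (hineq : ∀ t ∈ Icc a b, 0 ≤ f t ∧ f t ≤ ε + ∫ s in Ico a t, f s ∂μ) :
    ∀ t ∈ Icc a b, f t ≤ ε * Real.exp ((μ (Ico a t)).toReal) := by
  obtain ⟨M, hM⟩ := hbdd
  have hIco : ∀ t ∈ Icc a b, Ico a t ⊆ Icc a b := fun t ht =>
    Ico_subset_Icc_self.trans (Icc_subset_Icc_right ht.2)
  have hf_int : ∀ t ∈ Icc a b, IntegrableOn f (Ico a t) μ := fun t ht =>
    Integrable.of_bound hmeas.aestronglyMeasurable M ((ae_restrict_iff' measurableSet_Ico).2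
      (Eventually.of_forall fun s hs => hM s (hIco t ht hs)))
  refine le_mul_exp_of_self_improving_bound (g := fun t => μ.real (Ico a t)) (L := μ.real univ)
    (fun t ht => (hineq t ht).1) ⟨M, forall_mem_image.2 fun t ht => (le_abs_self _).trans (hM t ht)⟩
    (fun t _ => ⟨measureReal_nonneg, measureReal_mono (subset_univ _)⟩) fun K hK hfK t ht => ?_
  exact (hineq t ht).2.trans (add_le_add_right (setIntegral_Ico_le_mul_exp_measureReal_Ico_sub_one
    hK (hf_int t ht) fun s hs => hfK s (hIco t ht hs)) ε)

theorem stmt16 (a b : ℝ) (hab : a < b)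
    (μ : Measure ℝ) [IsFiniteMeasure μ]
    (ε : ℝ) (hε : 0 < ε)
    (f : ℝ → ℝ) (hmeas : Measurable f)
    (hbdd : ∃ M : ℝ, ∀ t ∈ Icc a b, |f t| ≤ M)
    (hrc : ∀ t ∈ Icc a b, ContinuousWithinAt f (Icc a b ∩ Ici t) t)
    (hineq : ∀ t ∈ Icc a b, 0 ≤ f t ∧ f t ≤ ε + ∫ s in Ico a t, f s ∂μ) :
    ∀ t ∈ Icc a b, f t ≤ ε * Real.exp ((μ (Ico a t)).toReal) :=
  stmt16_general a b μ ε f hmeas hbdd hineq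
end

section
/- In the sublevel-set setting, assume (a) and (b). Then there exists c > 0 such that for every t ∈ [0,T], every x ∈ C(t) with I_ε(t,x) ≠ ∅, and every family of coefficients (λ_i)_{i ∈ I_ε(t,x)} with λ_i ≥ 0 and Σ_{i∈I_ε(t,x)} λ_i = 1, one has ‖Σ_{i∈I_ε(t,x)} λ_i ∇g_i(t,x)‖ ≥ c. -/
open Set Metric

/-- The moving set given as a finite intersection of sublevel sets. -/
def Csub {E : Type*} {m : ℕ} (g : Fin m → ℝ → E → ℝ) (t : ℝ) : Set E :=
  {x | ∀ i, g i t x ≤ 0}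

/-- The set of `ε`-active indices at `(t, x)`. -/
def Iactive {E : Type*} {m : ℕ} (g : Fin m → ℝ → E → ℝ) (ε t : ℝ) (x : E) :
    Set (Fin m) :=
  {i | -ε ≤ g i t x ∧ g i t x ≤ 0}

/-!
The quantity `‖∑ λ_i ∇g_i(t,x)‖` is a continuous function of the triple `(t, x, λ)`, which
ranges over the set of points `(t, x)` of the bounded set `𝒬_ε` together with the weights `λ`
in the standard simplex supported on the `ε`-active indices. This set is closed and bounded in
a finite-dimensional space, hence compact, and positive linear independence says exactly that
the function does not vanish on it, so it has a positive minimum.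
-/

theorem IsCompact.exists_pos_forall_le {X : Type*} [TopologicalSpace X] {K : Set X}
    {f : X → ℝ} (hK : IsCompact K) (hf : ContinuousOn f K) (hpos : ∀ x ∈ K, 0 < f x) :
    ∃ c > 0, ∀ x ∈ K, c ≤ f x := by
  rcases K.eq_empty_or_nonempty with rfl | hne
  · exact ⟨1, one_pos, by simp⟩
  obtain ⟨x₀, hx₀, hmin⟩ := hK.exists_isMinOn hne hf
  exact ⟨f x₀, hpos x₀ hx₀, fun x hx => hmin hx⟩

section ActiveSimplex

variable {E : Type*} {m : ℕ}

def activeSimplexPairs (g : Fin m → ℝ → E → ℝ) (ε T : ℝ) : Set ((ℝ × E) × (Fin m → ℝ)) :=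
  {p | p.1.1 ∈ Icc 0 T ∧ p.1.2 ∈ Csub g p.1.1 ∧ p.2 ∈ stdSimplex ℝ (Fin m) ∧
    ∀ i, p.2 i ≠ 0 → i ∈ Iactive g ε p.1.1 p.1.2}

variable {g : Fin m → ℝ → E → ℝ} {ε T : ℝ}

theorem activeSimplexPairs_subset_prod :
    activeSimplexPairs g ε T ⊆ {q : ℝ × E | q.1 ∈ Icc 0 T ∧ q.2 ∈ Csub g q.1 ∧
      (Iactive g ε q.1 q.2).Nonempty} ×ˢ stdSimplex ℝ (Fin m) := by
  rintro ⟨⟨t, x⟩, lam⟩ ⟨ht, hx, hlam, hsupp⟩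
  obtain ⟨i, -, hi⟩ := Finset.exists_ne_zero_of_sum_ne_zero (hlam.2.symm ▸ one_ne_zero)
  exact ⟨⟨ht, hx, i, hsupp i hi⟩, hlam⟩

theorem isClosed_activeSimplexPairs [TopologicalSpace E]
    (hg : ∀ i, ContinuousOn (fun q : ℝ × E => g i q.1 q.2) (Icc 0 T ×ˢ univ)) :
    IsClosed (activeSimplexPairs g ε T) := by
  set A : Set ((ℝ × E) × (Fin m → ℝ)) := (Icc 0 T ×ˢ univ) ×ˢ univ
  have hA : IsClosed A := (isClosed_Icc.prod isClosed_univ).prod isClosed_univ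
  have hgA : ∀ i, ContinuousOn (fun p : (ℝ × E) × (Fin m → ℝ) => g i p.1.1 p.1.2) A :=
    fun i => (hg i).comp continuousOn_fst fun p hp => hp.1
  have hS : activeSimplexPairs g ε T = A ∩ (univ ×ˢ stdSimplex ℝ (Fin m)) ∩
      ⋂ i, ({p ∈ A | g i p.1.1 p.1.2 ≤ 0} ∩
        ({p | p.2 i = 0} ∪ {p ∈ A | -ε ≤ g i p.1.1 p.1.2})) := by
    ext ⟨⟨t, x⟩, lam⟩
    simp only [activeSimplexPairs, Csub, Iactive, A, mem_ofPred_eq, mem_inter_iff, mem_prod,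
      mem_univ, mem_iInter, mem_union, ne_eq]
    grind
  rw [hS]
  refine (hA.inter (isClosed_univ.prod (isClosed_stdSimplex ℝ _))).inter
    (isClosed_iInter fun i => (hA.isClosed_le (hgA i) continuousOn_const).inter
      ((isClosed_eq (by fun_prop) continuous_const).union
        (hA.isClosed_le continuousOn_const (hgA i))))

theorem isCompact_activeSimplexPairs [PseudoMetricSpace E] [ProperSpace E]
    (hQ : Bornology.IsBounded {q : ℝ × E | q.1 ∈ Icc 0 T ∧ q.2 ∈ Csub g q.1 ∧
      (Iactive g ε q.1 q.2).Nonempty})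
    (hg : ∀ i, ContinuousOn (fun q : ℝ × E => g i q.1 q.2) (Icc 0 T ×ˢ univ)) :
    IsCompact (activeSimplexPairs g ε T) :=
  isCompact_of_isClosed_isBounded (isClosed_activeSimplexPairs hg)
    ((hQ.prod (isCompact_stdSimplex ℝ _).isBounded).subset activeSimplexPairs_subset_prod)

theorem exists_pos_le_norm_sum_smul_of_posLinIndep {F : Type*} [NormedAddCommGroup F]
    [NormedSpace ℝ F] [PseudoMetricSpace E] [ProperSpace E] (v : Fin m → ℝ → E → F)
    (hQ : Bornology.IsBounded {q : ℝ × E | q.1 ∈ Icc 0 T ∧ q.2 ∈ Csub g q.1 ∧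
      (Iactive g ε q.1 q.2).Nonempty})
    (hPLI : ∀ t ∈ Icc 0 T, ∀ x ∈ Csub g t, (Iactive g ε t x).Nonempty →
      ∀ α : Fin m → ℝ, (∀ i, 0 ≤ α i) → (∀ i, i ∉ Iactive g ε t x → α i = 0) →
        ∑ i, α i • v i t x = 0 → ∀ i, α i = 0)
    (hg : ∀ i, ContinuousOn (fun q : ℝ × E => g i q.1 q.2) (Icc 0 T ×ˢ univ))
    (hv : ∀ i, ContinuousOn (fun q : ℝ × E => v i q.1 q.2) (Icc 0 T ×ˢ univ)) :
    ∃ c > 0, ∀ p ∈ activeSimplexPairs g ε T, c ≤ ‖∑ i, p.2 i • v i p.1.1 p.1.2‖ := by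
  refine (isCompact_activeSimplexPairs hQ hg).exists_pos_forall_le ?_ ?_
  · refine ContinuousOn.norm (continuousOn_finsetSum _ fun i _ => ContinuousOn.smul ?_ ?_)
    · exact (continuous_apply i).comp continuous_snd |>.continuousOn
    · exact (hv i).comp continuousOn_fst fun p hp => ⟨hp.1, mem_univ _⟩
  rintro ⟨⟨t, x⟩, lam⟩ hp
  obtain ⟨⟨ht, hx, hne⟩, hlam⟩ := activeSimplexPairs_subset_prod hp
  refine norm_pos_iff.2 fun hzero => ?_
  have hlam0 : lam = 0 := funext <| hPLI t ht x hx hne lam hlam.1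
    (fun i => not_imp_comm.1 (hp.2.2.2 i)) hzero
  simpa [hlam0] using hlam.2

end ActiveSimplex

theorem stmt17_general (d m : ℕ) (T : ℝ)
    (g : Fin m → ℝ → EuclideanSpace ℝ (Fin d) → ℝ)
    -- assumption (a)
    (ε : ℝ)
    (hQbdd : Bornology.IsBounded {p : ℝ × EuclideanSpace ℝ (Fin d) |
      p.1 ∈ Icc (0:ℝ) T ∧ p.2 ∈ Csub g p.1 ∧ (Iactive g ε p.1 p.2).Nonempty})
    (hPLI : ∀ t ∈ Icc (0:ℝ) T, ∀ x ∈ Csub g t, (Iactive g ε t x).Nonempty →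
      ∀ α : Fin m → ℝ, (∀ i, 0 ≤ α i) → (∀ i, i ∉ Iactive g ε t x → α i = 0) →
        ∑ i, α i • gradient (g i t) x = 0 → ∀ i, α i = 0)
    -- assumption (b)
    (hg_cont : ∀ i, ContinuousOn (fun p : ℝ × EuclideanSpace ℝ (Fin d) => g i p.1 p.2)
      (Icc (0:ℝ) T ×ˢ univ))
    (hgrad_cont : ∀ i, ContinuousOn
      (fun p : ℝ × EuclideanSpace ℝ (Fin d) => gradient (g i p.1) p.2)
      (Icc (0:ℝ) T ×ˢ univ)) :
    ∃ c > 0, ∀ t ∈ Icc (0:ℝ) T, ∀ x ∈ Csub g t, (Iactive g ε t x).Nonempty →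
      ∀ lam : Fin m → ℝ, (∀ i, 0 ≤ lam i) → (∀ i, i ∉ Iactive g ε t x → lam i = 0) →
        (∑ i, lam i) = 1 →
        c ≤ ‖∑ i, lam i • gradient (g i t) x‖ := by
  obtain ⟨c, hc, hbound⟩ := exists_pos_le_norm_sum_smul_of_posLinIndep
    (fun i t x => gradient (g i t) x) hQbdd hPLI hg_cont hgrad_cont
  refine ⟨c, hc, fun t ht x hx _ lam hlam0 hsupp hsum => hbound ((t, x), lam) ?_⟩
  exact ⟨ht, hx, ⟨hlam0, hsum⟩, fun i => not_imp_comm.1 (hsupp i)⟩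

theorem stmt17 (d m : ℕ) (T : ℝ) (hT : 0 < T)
    (g : Fin m → ℝ → EuclideanSpace ℝ (Fin d) → ℝ)
    (hdiff : ∀ i, ∀ t ∈ Icc (0:ℝ) T, ∀ x, DifferentiableAt ℝ (g i t) x)
    -- assumption (a)
    (ε : ℝ) (hε : 0 < ε)
    (hQbdd : Bornology.IsBounded {p : ℝ × EuclideanSpace ℝ (Fin d) |
      p.1 ∈ Icc (0:ℝ) T ∧ p.2 ∈ Csub g p.1 ∧ (Iactive g ε p.1 p.2).Nonempty})
    (hPLI : ∀ t ∈ Icc (0:ℝ) T, ∀ x ∈ Csub g t, (Iactive g ε t x).Nonempty →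
      ∀ α : Fin m → ℝ, (∀ i, 0 ≤ α i) → (∀ i, i ∉ Iactive g ε t x → α i = 0) →
        ∑ i, α i • gradient (g i t) x = 0 → ∀ i, α i = 0)
    -- assumption (b)
    (hg_cont : ∀ i, ContinuousOn (fun p : ℝ × EuclideanSpace ℝ (Fin d) => g i p.1 p.2)
      (Icc (0:ℝ) T ×ˢ univ))
    (hgrad_cont : ∀ i, ContinuousOn
      (fun p : ℝ × EuclideanSpace ℝ (Fin d) => gradient (g i p.1) p.2)
      (Icc (0:ℝ) T ×ˢ univ))
    (hequi : ∀ ε' > 0, ∃ δ > 0, ∀ i, ∀ x : EuclideanSpace ℝ (Fin d),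
      ∀ s ∈ Icc (0:ℝ) T, ∀ t ∈ Icc (0:ℝ) T, |s - t| < δ → |g i s x - g i t x| < ε') :
    ∃ c > 0, ∀ t ∈ Icc (0:ℝ) T, ∀ x ∈ Csub g t, (Iactive g ε t x).Nonempty →
      ∀ lam : Fin m → ℝ, (∀ i, 0 ≤ lam i) → (∀ i, i ∉ Iactive g ε t x → lam i = 0) →
        (∑ i, lam i) = 1 →
        c ≤ ‖∑ i, lam i • gradient (g i t) x‖ :=
  stmt17_general d m T g ε hQbdd hPLI hg_cont hgrad_cont
end
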